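/- Let A be a unital C*-algebra and let a ∈ A be selfadjoint with 0 ≤ a. Let ζ = s + i·t ∈ ℂ with s ≥ 0 and t ≠ 0, write φ = arg ζ ∈ (0,2π), and set ζ̂ := −s + i·t. Then both a − ζ·1 and a − ζ̂·1 are invertible, and ‖(a − ζ̂·1)·(a − ζ·1)⁻¹‖ ≤ 2·c(φ). -/

import Mathlib

/-- The coefficient `c(φ)` from the paper, for `φ ∈ (0, 2π)`:
`c(φ) = 1/|sin φ|` if `φ ∈ (0, π/2) ∪ (3π/2, 2π)`, and `c(φ) = 1` if `φ ∈ [π/2, 3π/2]`. -/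
noncomputable def cArg (φ : ℝ) : ℝ :=
  if (0 < φ ∧ φ < Real.pi / 2) ∨ (3 * Real.pi / 2 < φ ∧ φ < 2 * Real.pi) then
    |Real.sin φ|⁻¹
  else 1

/-!
By the continuous functional calculus for the normal element `a`, the norm of
`(a - ζ̂) (a - ζ)⁻¹` is at most the supremum of `|x - ζ̂| / |x - ζ|` over the spectrum, which
lies in `ℝ`. With `ζ = s + it` and `ζ̂ = -conj ζ`, the elementary inequality
`|x + s - it| |t| ≤ 2 |ζ| |x - s - it|` holds for every real `x`, and `|ζ| / |t| = 1 / |sin φ|`.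
When `φ ∈ [π/2, 3π/2]` instead, `s = |ζ| cos φ ≤ 0` forces `s = 0`, so `ζ̂ = ζ`.
-/

open Complex ComplexConjugate

lemma cArg_nonneg (φ : ℝ) : 0 ≤ cArg φ := by
  unfold cArg
  split <;> positivity

lemma norm_add_conj_mul_abs_im_le (x : ℝ) (ζ : ℂ) :
    ‖(x : ℂ) + conj ζ‖ * |ζ.im| ≤ 2 * ‖ζ‖ * ‖(x : ℂ) - ζ‖ := by
  rw [← sq_le_sq₀ (by positivity) (by positivity), mul_pow, mul_pow, mul_pow, sq_abs,
    Complex.sq_norm, Complex.sq_norm, Complex.sq_norm]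
  simp only [normSq_apply, add_re, sub_re, add_im, sub_im, ofReal_re, ofReal_im, conj_re,
    conj_im]
  -- with `u = x - re ζ`, this is AM-GM: `4 re ζ · u · (im ζ)² ≤ 4 (re ζ)² u² + (im ζ)⁴`
  nlinarith [sq_nonneg (2 * ζ.re * (x - ζ.re) - ζ.im ^ 2), sq_nonneg (ζ.im * (x - ζ.re))]

lemma re_im_of_eq_norm_mul_exp {ζ : ℂ} {φ : ℝ} (hpolar : ζ = ‖ζ‖ * exp (φ * I)) :
    ζ.re = ‖ζ‖ * Real.cos φ ∧ ζ.im = ‖ζ‖ * Real.sin φ := by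
  constructor
  · simpa only [re_ofReal_mul, exp_ofReal_mul_I_re] using congrArg re hpolar
  · simpa only [im_ofReal_mul, exp_ofReal_mul_I_im] using congrArg im hpolar

lemma cArg_eq_norm_div_abs_im {ζ : ℂ} {φ : ℝ} (hζ : ζ ≠ 0) (hpolar : ζ = ‖ζ‖ * exp (φ * I))
    (hφ : (0 < φ ∧ φ < Real.pi / 2) ∨ (3 * Real.pi / 2 < φ ∧ φ < 2 * Real.pi)) :
    cArg φ = ‖ζ‖ / |ζ.im| := by
  rw [cArg, if_pos hφ, (re_im_of_eq_norm_mul_exp hpolar).2, abs_mul, abs_norm,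
    div_mul_cancel_left₀ (norm_ne_zero_iff.mpr hζ)]

lemma re_nonpos_of_eq_norm_mul_exp {ζ : ℂ} {φ : ℝ} (hpolar : ζ = ‖ζ‖ * exp (φ * I))
    (hφ : φ ∈ Set.Icc (Real.pi / 2) (3 * Real.pi / 2)) : ζ.re ≤ 0 := by
  rw [(re_im_of_eq_norm_mul_exp hpolar).1]
  exact mul_nonpos_of_nonneg_of_nonpos (norm_nonneg ζ)
    (Real.cos_nonpos_of_pi_div_two_le_of_le hφ.1 (by linarith [hφ.2]))

lemma norm_add_conj_le_two_mul_cArg {ζ : ℂ} {φ : ℝ} (hre : 0 ≤ ζ.re) (him : ζ.im ≠ 0)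
    (hφ : φ ∈ Set.Ioo 0 (2 * Real.pi)) (hpolar : ζ = ‖ζ‖ * exp (φ * I)) (x : ℝ) :
    ‖(x : ℂ) + conj ζ‖ ≤ 2 * cArg φ * ‖(x : ℂ) - ζ‖ := by
  by_cases hsector : (0 < φ ∧ φ < Real.pi / 2) ∨ (3 * Real.pi / 2 < φ ∧ φ < 2 * Real.pi)
  · have hζ : ζ ≠ 0 := fun h => him (by simp [h])
    rw [cArg_eq_norm_div_abs_im hζ hpolar hsector, mul_div_assoc', div_mul_eq_mul_div,
      le_div_iff₀ (abs_pos.mpr him)]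
    exact norm_add_conj_mul_abs_im_le x ζ
  · have hmid : φ ∈ Set.Icc (Real.pi / 2) (3 * Real.pi / 2) :=
      ⟨not_lt.mp fun h => hsector (.inl ⟨hφ.1, h⟩), not_lt.mp fun h => hsector (.inr ⟨h, hφ.2⟩)⟩
    have hconj : conj ζ = -ζ := by
      have hre0 : ζ.re = 0 := le_antisymm (re_nonpos_of_eq_norm_mul_exp hpolar hmid) hre
      apply Complex.ext <;> simp [hre0]
    rw [cArg, if_neg hsector, hconj, ← sub_eq_add_neg]
    linarith [norm_nonneg ((x : ℂ) - ζ)]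

lemma isUnit_sub_smul_one_of_notMem_spectrum {R A : Type*} [CommRing R] [Ring A] [Algebra R A]
    {a : A} {z : R} (hz : z ∉ spectrum R a) : IsUnit (a - z • (1 : A)) := by
  simpa [Algebra.algebraMap_eq_smul_one, neg_sub] using (spectrum.notMem_iff.mp hz).neg

lemma IsSelfAdjoint.notMem_spectrum_of_im_ne_zero {A : Type*} [CStarAlgebra A] {a : A}
    (ha : IsSelfAdjoint a) {z : ℂ} (hz : z.im ≠ 0) : z ∉ spectrum ℂ a := fun h =>
  hz (by rw [ha.mem_spectrum_eq_re h, ofReal_im])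

lemma norm_sub_smul_one_mul_inverse_le {A : Type*} [CStarAlgebra A] {a : A}
    (ha : IsStarNormal a) {w z : ℂ} {C : ℝ} (hC : 0 ≤ C) (hz : z ∉ spectrum ℂ a)
    (h : ∀ y ∈ spectrum ℂ a, ‖y - w‖ ≤ C * ‖y - z‖) :
    ‖(a - w • (1 : A)) * Ring.inverse (a - z • (1 : A))‖ ≤ C := by
  have hsub : ∀ c : ℂ, cfc (fun y : ℂ => y - c) a = a - c • 1 := fun c => by
    rw [cfc_sub _ _ a, cfc_id' ℂ a, cfc_const c a, Algebra.algebraMap_eq_smul_one]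
  have hz' : ∀ y ∈ spectrum ℂ a, y - z ≠ 0 := fun y hy h => hz (sub_eq_zero.mp h ▸ hy)
  rw [← hsub, ← hsub, ← cfc_map_div _ _ a hz']
  refine norm_cfc_le hC fun y hy => ?_
  rw [norm_div, div_le_iff₀ (norm_pos_iff.mpr (hz' y hy))]
  exact h y hy

theorem reflected_resolvent_norm_bound_general {A : Type*} [CStarAlgebra A]
    (a : A) (ha : IsSelfAdjoint a)
    (s t : ℝ) (hs : 0 ≤ s) (ht : t ≠ 0) (φ : ℝ)
    (hφ : φ ∈ Set.Ioo (0 : ℝ) (2 * Real.pi))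
    (hζφ : (s : ℂ) + (t : ℂ) * Complex.I
      = ((‖(s : ℂ) + (t : ℂ) * Complex.I‖ : ℝ) : ℂ) * Complex.exp ((φ : ℂ) * Complex.I)) :
    IsUnit (a - ((s : ℂ) + (t : ℂ) * Complex.I) • (1 : A)) ∧
    IsUnit (a - (((-s : ℝ) : ℂ) + (t : ℂ) * Complex.I) • (1 : A)) ∧
    ‖(a - (((-s : ℝ) : ℂ) + (t : ℂ) * Complex.I) • (1 : A)) *
        Ring.inverse (a - ((s : ℂ) + (t : ℂ) * Complex.I) • (1 : A))‖ ≤ 2 * cArg φ := by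
  set ζ : ℂ := s + t * I
  have hre : ζ.re = s := by simp [ζ]
  have him : ζ.im = t := by simp [ζ]
  have hreflect : ((-s : ℝ) : ℂ) + t * I = -conj ζ := by apply Complex.ext <;> simp [ζ]
  have hζσ : ζ ∉ spectrum ℂ a := ha.notMem_spectrum_of_im_ne_zero (him ▸ ht)
  have hreflectσ : -conj ζ ∉ spectrum ℂ a :=
    ha.notMem_spectrum_of_im_ne_zero (by simpa [him] using ht)
  rw [hreflect]
  refine ⟨isUnit_sub_smul_one_of_notMem_spectrum hζσ,
    isUnit_sub_smul_one_of_notMem_spectrum hreflectσ, ?_⟩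
  refine norm_sub_smul_one_mul_inverse_le ha.isStarNormal
    (mul_nonneg zero_le_two (cArg_nonneg φ)) hζσ fun y hy => ?_
  rw [ha.mem_spectrum_eq_re hy, sub_neg_eq_add]
  exact norm_add_conj_le_two_mul_cArg (hre ▸ hs) (him ▸ ht) hφ hζφ y.re

/-- In a unital C*-algebra, let `a` be selfadjoint with `0 ≤ a`. For `ζ = s + i t` with
`s ≥ 0`, `t ≠ 0`, `φ = arg ζ ∈ (0, 2π)`, and `ζ̂ = −s + i t`, both `a − ζ·1` and `a − ζ̂·1`
are invertible and `‖(a − ζ̂·1)(a − ζ·1)⁻¹‖ ≤ 2 c(φ)`. -/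
theorem reflected_resolvent_norm_bound {A : Type*} [CStarAlgebra A]
    [PartialOrder A] [StarOrderedRing A]
    (a : A) (ha : IsSelfAdjoint a) (ha0 : 0 ≤ a)
    (s t : ℝ) (hs : 0 ≤ s) (ht : t ≠ 0) (φ : ℝ)
    (hφ : φ ∈ Set.Ioo (0 : ℝ) (2 * Real.pi))
    (hζφ : (s : ℂ) + (t : ℂ) * Complex.I
      = ((‖(s : ℂ) + (t : ℂ) * Complex.I‖ : ℝ) : ℂ) * Complex.exp ((φ : ℂ) * Complex.I)) :
    IsUnit (a - ((s : ℂ) + (t : ℂ) * Complex.I) • (1 : A)) ∧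
    IsUnit (a - (((-s : ℝ) : ℂ) + (t : ℂ) * Complex.I) • (1 : A)) ∧
    ‖(a - (((-s : ℝ) : ℂ) + (t : ℂ) * Complex.I) • (1 : A)) *
        Ring.inverse (a - ((s : ℂ) + (t : ℂ) * Complex.I) • (1 : A))‖ ≤ 2 * cArg φ :=
  reflected_resolvent_norm_bound_general a ha s t hs ht φ hφ hζφ
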